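/- arXiv:2207.09134 — 6 statements merged into one kernel-verified Lean document; each statement's English description precedes it below -/
import Mathlib

section
/- Suppose h : ℕ → ℕ is a monotonically increasing function having the NS property, and let y, z ∈ ℕ with y ≤ h(z). Then the sets A = { y ⊕ (z−k) : k = 1, 2, …, z } and B = { min(y, h(z−k)) ⊕ (z−k) : k = 1, 2, …, z } are equal; equivalently, { y ⊕ w : w < z } = { min(y, h(w)) ⊕ w : w < z }. -/
/-- A function `h : ℕ → ℕ` has the NS property if whenever `⌊z/2^i⌋ = ⌊z'/2^i⌋`
for some `i ≥ 1`, we have `⌊h z/2^(i-1)⌋ = ⌊h z'/2^(i-1)⌋`. -/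
def NSProperty (h : ℕ → ℕ) : Prop :=
  ∀ z z' i : ℕ, 1 ≤ i → z / 2 ^ i = z' / 2 ^ i →
    h z / 2 ^ (i - 1) = h z' / 2 ^ (i - 1)

/-!
For `w < z` let `i` be the leading binary digit in which they differ, so that
`w / 2^(i+1) = z / 2^(i+1)` and `w / 2^i < z / 2^i`. By the NS property `h w` and `h z` agree
from digit `i` on, hence so do `min y (h w)` and `min y (h z)`, and so does every number
between `h w` and `h z`.

The first consequence makes `w ↦ min y (h w) ⊕ w` injective. The second shows that if
`h w < y ≤ h z`, then `min y (h w) ⊕ w = y ⊕ w'` for `w' = w ⊕ y ⊕ h w`, which agrees with `w`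
from digit `i` on and is therefore still `< z`. So B ⊆ A, and both sets have `z` elements.
-/

namespace Nat

theorem exists_div_two_pow_lt_and_div_two_pow_succ_eq {a b : ℕ} (hab : a < b) :
    ∃ i, a / 2 ^ i < b / 2 ^ i ∧ a / 2 ^ (i + 1) = b / 2 ^ (i + 1) := by
  have hb : b < 2 ^ (b + 1) := Nat.lt_of_succ_lt Nat.lt_two_pow_self
  have hex : ∃ i, a / 2 ^ (i + 1) = b / 2 ^ (i + 1) :=
    ⟨b, by rw [Nat.div_eq_of_lt (hab.trans hb), Nat.div_eq_of_lt hb]⟩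
  refine ⟨Nat.find hex, ?_, Nat.find_spec hex⟩
  match hi : Nat.find hex with
  | 0 => simpa using hab
  | j + 1 =>
    have hne : a / 2 ^ (j + 1) ≠ b / 2 ^ (j + 1) := Nat.find_min hex (by omega)
    exact lt_of_le_of_ne (Nat.div_le_div_right hab.le) hne

theorem min_div (a b c : ℕ) : min a b / c = min (a / c) (b / c) :=
  Monotone.map_min fun _ _ h => Nat.div_le_div_right h

end Nat

theorem NSProperty.div_two_pow_eq {h : ℕ → ℕ} (hNS : NSProperty h) {w w' i : ℕ}
    (hww' : w / 2 ^ (i + 1) = w' / 2 ^ (i + 1)) : h w / 2 ^ i = h w' / 2 ^ i :=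
  hNS w w' (i + 1) (Nat.le_add_left 1 i) hww'

theorem NSProperty.injective_min_xor {h : ℕ → ℕ} (hNS : NSProperty h) (y : ℕ) :
    Function.Injective fun w => min y (h w) ^^^ w := by
  refine .of_lt_imp_ne fun w₁ w₂ hlt heq => ?_
  obtain ⟨i, hlt_i, heq_i⟩ := Nat.exists_div_two_pow_lt_and_div_two_pow_succ_eq hlt
  have hmin : min y (h w₁) / 2 ^ i = min y (h w₂) / 2 ^ i := by
    rw [Nat.min_div, Nat.min_div, hNS.div_two_pow_eq heq_i]
  have := congrArg (· / 2 ^ i) heq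
  simp only [Nat.xor_div_two_pow, hmin, Nat.xor_right_inj] at this
  exact hlt_i.ne this

theorem NSProperty.exists_lt_xor_eq_min_xor {h : ℕ → ℕ} (hNS : NSProperty h) {y z w : ℕ}
    (hyz : y ≤ h z) (hwz : w < z) : ∃ w' < z, y ^^^ w' = min y (h w) ^^^ w := by
  rcases le_or_gt y (h w) with hy | hy
  · exact ⟨w, hwz, by rw [min_eq_left hy]⟩
  obtain ⟨i, hlt_i, heq_i⟩ := Nat.exists_div_two_pow_lt_and_div_two_pow_succ_eq hwz
  have hh : h w / 2 ^ i = h z / 2 ^ i := hNS.div_two_pow_eq heq_i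
  have hy_i : y / 2 ^ i = h w / 2 ^ i :=
    le_antisymm (hh ▸ Nat.div_le_div_right hyz) (Nat.div_le_div_right hy.le)
  refine ⟨w ^^^ (y ^^^ h w), Nat.lt_of_div_lt_div (c := 2 ^ i) ?_, ?_⟩
  · rwa [Nat.xor_div_two_pow, Nat.xor_div_two_pow, hy_i, Nat.xor_self, Nat.xor_zero]
  · rw [min_eq_right hy.le, Nat.xor_comm w, ← Nat.xor_assoc, ← Nat.xor_assoc, Nat.xor_self,
      Nat.zero_xor]

theorem Finset.image_eq_image_of_injOn_of_subset {α β : Type*} [DecidableEq β] {s : Finset α}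
    {f g : α → β} (hf : Set.InjOn f s) (hfg : s.image f ⊆ s.image g) :
    s.image f = s.image g :=
  Finset.eq_of_subset_of_card_le hfg <| by
    rw [Finset.card_image_of_injOn hf]
    exact Finset.card_image_le

theorem setOf_xor_sub_eq_image_range (c : ℕ → ℕ) (z : ℕ) :
    {a | ∃ k, 1 ≤ k ∧ k ≤ z ∧ a = c (z - k) ^^^ (z - k)} =
      ((Finset.range z).image fun w => c w ^^^ w : Finset ℕ) := by
  ext a
  simp only [Set.mem_ofPred_eq, Finset.coe_image, Finset.coe_range, Set.mem_image, Set.mem_Iio]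
  constructor
  · rintro ⟨k, hk1, hkz, rfl⟩
    exact ⟨z - k, by omega, rfl⟩
  · rintro ⟨w, hwz, rfl⟩
    exact ⟨z - w, by omega, Nat.sub_le z w, by rw [Nat.sub_sub_self hwz.le]⟩

theorem nimsum_set_eq_of_NS_general
    (h : ℕ → ℕ) (hNS : NSProperty h)
    (y z : ℕ) (hyz : y ≤ h z) :
    {a | ∃ k, 1 ≤ k ∧ k ≤ z ∧ a = y ^^^ (z - k)} =
      {b | ∃ k, 1 ≤ k ∧ k ≤ z ∧ b = min y (h (z - k)) ^^^ (z - k)} := by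
  rw [setOf_xor_sub_eq_image_range (fun _ => y),
    setOf_xor_sub_eq_image_range (fun w => min y (h w))]
  refine congrArg _ (Finset.image_eq_image_of_injOn_of_subset
    (hNS.injective_min_xor y).injOn fun b hb => ?_).symm
  obtain ⟨w, hw, rfl⟩ := Finset.mem_image.mp hb
  obtain ⟨w', hw', hxor⟩ := hNS.exists_lt_xor_eq_min_xor hyz (Finset.mem_range.mp hw)
  exact Finset.mem_image.mpr ⟨w', Finset.mem_range.mpr hw', hxor⟩

/-- If `h` is monotonically increasing with the NS property and `y ≤ h z`, then
`{ y ⊕ (z-k) : k = 1,…,z } = { min(y, h(z-k)) ⊕ (z-k) : k = 1,…,z }`. -/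
theorem nimsum_set_eq_of_NS
    (h : ℕ → ℕ) (hmono : Monotone h) (hNS : NSProperty h)
    (y z : ℕ) (hyz : y ≤ h z) :
    {a | ∃ k, 1 ≤ k ∧ k ≤ z ∧ a = y ^^^ (z - k)} =
      {b | ∃ k, 1 ≤ k ∧ k ≤ z ∧ b = min y (h (z - k)) ^^^ (z - k)} :=
  nimsum_set_eq_of_NS_general h hNS y z hyz
end

section
/- For any k, h, i ∈ ℕ, one has k ⊕ h ⊕ i = mex({ (k−t) ⊕ h ⊕ i : t = 1, 2, …, k } ∪ { k ⊕ (h−t) ⊕ i : t = 1, 2, …, h } ∪ { k ⊕ h ⊕ (i−t) : t = 1, 2, …, i }). -/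
/-!
Decreasing one of `k`, `h`, `i` changes exactly one summand of `k ⊕ h ⊕ i`, so it never reproduces
the nim-sum. Conversely, if `n < k ⊕ h ⊕ i`, the highest bit of `d = n ⊕ k ⊕ h ⊕ i` is set in
`k ⊕ h ⊕ i`, hence in one of `k`, `h`, `i`; xoring that one with `d` decreases it and turns the
nim-sum into `n`.
-/

/-- The minimum excluded value of a set of natural numbers. -/
noncomputable def mex (S : Set ℕ) : ℕ := sInf {n | n ∉ S}

theorem mex_eq_of_notMem_of_forall_lt_mem {S : Set ℕ} {n : ℕ} (hn : n ∉ S)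
    (hlt : ∀ m < n, m ∈ S) : mex S = n :=
  le_antisymm (Nat.sInf_le hn) (le_csInf ⟨n, hn⟩ fun _ hm => not_lt.1 fun h => hm (hlt _ h))

theorem exists_pos_le_sub_iff_exists_lt {k : ℕ} {P : ℕ → Prop} :
    (∃ t, 1 ≤ t ∧ t ≤ k ∧ P (k - t)) ↔ ∃ j < k, P j := by
  constructor
  · rintro ⟨t, ht, htk, hP⟩
    exact ⟨k - t, by omega, hP⟩
  · rintro ⟨j, hjk, hP⟩
    exact ⟨k - j, by omega, by omega, by rwa [Nat.sub_sub_self hjk.le]⟩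

namespace Nat

theorem lt_xor_xor_cases {a b c n : ℕ} (hn : n < a ^^^ b ^^^ c) :
    n ^^^ c ^^^ b < a ∨ a ^^^ (n ^^^ c) < b ∨ a ^^^ b ^^^ n < c := by
  rcases lt_xor_cases hn with hab | hc
  · rcases lt_xor_cases hab with ha | hb
    exacts [Or.inl ha, Or.inr (Or.inl (by rwa [Nat.xor_comm]))]
  · exact Or.inr (Or.inr (by rwa [Nat.xor_comm]))

end Nat

/-- For any `k h i : ℕ`, the nim-sum `k ⊕ h ⊕ i` equals the mex of the set of
nim-sums obtained by strictly decreasing exactly one of `k`, `h`, `i`. -/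
theorem nimsum_eq_mex_decrease (k h i : ℕ) :
    k ^^^ h ^^^ i =
      mex ({g | ∃ t, 1 ≤ t ∧ t ≤ k ∧ g = (k - t) ^^^ h ^^^ i} ∪
           {g | ∃ t, 1 ≤ t ∧ t ≤ h ∧ g = k ^^^ (h - t) ^^^ i} ∪
           {g | ∃ t, 1 ≤ t ∧ t ≤ i ∧ g = k ^^^ h ^^^ (i - t)}) := by
  symm
  apply mex_eq_of_notMem_of_forall_lt_mem
  · rintro ((⟨t, ht, htk, heq⟩ | ⟨t, ht, htk, heq⟩) | ⟨t, ht, htk, heq⟩)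
    · have := Nat.xor_left_inj.1 (Nat.xor_left_inj.1 heq)
      omega
    · have := Nat.xor_right_inj.1 (Nat.xor_left_inj.1 heq)
      omega
    · have := Nat.xor_right_inj.1 heq
      omega
  · intro n hn
    rcases Nat.lt_xor_xor_cases hn with hk | hh | hi
    · left; left
      exact (exists_pos_le_sub_iff_exists_lt (P := (n = · ^^^ h ^^^ i))).2
        ⟨_, hk, by rw [xor_cancel_right, xor_cancel_right]⟩
    · left; right
      exact (exists_pos_le_sub_iff_exists_lt (P := (n = k ^^^ · ^^^ i))).2
        ⟨_, hh, by rw [xor_cancel_left, xor_cancel_right]⟩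
    · right
      exact (exists_pos_le_sub_iff_exists_lt (P := (n = k ^^^ h ^^^ ·))).2
        ⟨_, hi, by rw [xor_cancel_left]⟩
end

section
/- Let i ∈ ℕ and let z, z' ∈ ℕ with z < z'. If ⌊z/2^i⌋ < ⌊z'/2^i⌋, then there exist c, s, t ∈ ℕ with s ≥ i and 0 ≤ t < 2^s such that z = c·2^(s+1) + t < c·2^(s+1) + 2^s ≤ z'. -/
/-!
Let `s ≥ i` be the last exponent at which the quotients `z / 2 ^ s < z' / 2 ^ s` still differ,
so that `z / 2 ^ (s + 1) = z' / 2 ^ (s + 1)`. Two numbers with the same half differ by at most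
one, so `z / 2 ^ s = 2 c` and `z' / 2 ^ s = 2 c + 1` for `c = z / 2 ^ (s + 1)`: bit `s` is the
highest bit in which `z` and `z'` differ. Then `z = c * 2 ^ (s + 1) + z % 2 ^ s` while `z'` is at
least `(2 c + 1) * 2 ^ s`.
-/

namespace Nat

theorem exists_le_div_pow_lt_and_div_pow_succ_eq {b i z z' : ℕ} (hb : 1 < b)
    (h : z / b ^ i < z' / b ^ i) :
    ∃ s, i ≤ s ∧ z / b ^ s < z' / b ^ s ∧ z / b ^ (s + 1) = z' / b ^ (s + 1) := by
  by_contra! H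
  have hle : z ≤ z' := (lt_of_div_lt_div h).le
  have hlt_of_le : ∀ s, i ≤ s → z / b ^ s < z' / b ^ s := by
    intro s hs
    induction s, hs using le_induction with
    | base => exact h
    | succ s hs ih => exact (Nat.div_le_div_right hle).lt_of_ne (H s hs ih)
  have hvanish : z' / b ^ (i + z') = 0 :=
    div_eq_of_lt ((Nat.lt_pow_self hb).trans_le (pow_le_pow_right₀ hb.le (le_add_left _ _)))
  simpa [hvanish] using hlt_of_le (i + z') (le_add_right _ _)

theorem eq_two_mul_and_eq_succ_of_lt_of_div_two_eq {a b : ℕ} (hab : a < b) (h : a / 2 = b / 2) :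
    a = 2 * (a / 2) ∧ b = 2 * (a / 2) + 1 := by
  omega

end Nat

theorem exists_of_floor_div_pow_lt_general (i z z' : ℕ)
    (hlt : z / 2 ^ i < z' / 2 ^ i) :
    ∃ c s t : ℕ, i ≤ s ∧ t < 2 ^ s ∧
      z = c * 2 ^ (s + 1) + t ∧
      z < c * 2 ^ (s + 1) + 2 ^ s ∧
      c * 2 ^ (s + 1) + 2 ^ s ≤ z' := by
  obtain ⟨s, his, hlt_s, heq⟩ := Nat.exists_le_div_pow_lt_and_div_pow_succ_eq one_lt_two hlt
  rw [pow_succ, ← Nat.div_div_eq_div_mul, ← Nat.div_div_eq_div_mul] at heq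
  obtain ⟨hz, hz'⟩ := Nat.eq_two_mul_and_eq_succ_of_lt_of_div_two_eq hlt_s heq
  set c := z / 2 ^ s / 2
  have hmod : z % 2 ^ s < 2 ^ s := Nat.mod_lt _ (by positivity)
  have hdecomp : z / 2 ^ s * 2 ^ s + z % 2 ^ s = z := Nat.div_add_mod' z (2 ^ s)
  have hbelow : z' / 2 ^ s * 2 ^ s ≤ z' := Nat.div_mul_le_self z' (2 ^ s)
  have hblock : c * 2 ^ (s + 1) = z / 2 ^ s * 2 ^ s := by rw [hz]; ring
  refine ⟨c, s, z % 2 ^ s, his, hmod, ?_, ?_, ?_⟩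
  · rw [hblock, hdecomp]
  · rw [hblock]; omega
  · rw [hz'] at hbelow; rw [hblock, hz]; linarith

/-- For `z < z'`, if `⌊z/2^i⌋ < ⌊z'/2^i⌋`, then there exist `c, s, t` with
`s ≥ i`, `t < 2^s`, and `z = c·2^(s+1) + t < c·2^(s+1) + 2^s ≤ z'`. -/
theorem exists_of_floor_div_pow_lt (i z z' : ℕ) (hzz' : z < z')
    (hlt : z / 2 ^ i < z' / 2 ^ i) :
    ∃ c s t : ℕ, i ≤ s ∧ t < 2 ^ s ∧
      z = c * 2 ^ (s + 1) + t ∧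
      z < c * 2 ^ (s + 1) + 2 ^ s ∧
      c * 2 ^ (s + 1) + 2 ^ s ≤ z' :=
  exists_of_floor_div_pow_lt_general i z z' hlt
end

section
/- Let s ≥ 1 and let x : Fin s → ℕ. Then x₁ ⊕ x₂ ⊕ ⋯ ⊕ x_s = mex( ⋃_{i=1}^{s} { x₁ ⊕ ⋯ ⊕ x_{i−1} ⊕ (x_i − k) ⊕ x_{i+1} ⊕ ⋯ ⊕ x_s : k = 1, 2, …, x_i } ); that is, the nim-sum of the coordinates equals the mex of the nim-sums obtained by strictly decreasing exactly one coordinate. -/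
/-- The nim-sum (bitwise XOR) of the coordinates of `x : Fin s → ℕ`. -/
def nimSum {s : ℕ} (x : Fin s → ℕ) : ℕ := (List.ofFn x).foldr (· ^^^ ·) 0

@[simp]
theorem nimSum_zero (x : Fin 0 → ℕ) : nimSum x = 0 := rfl

theorem nimSum_succ {s : ℕ} (x : Fin (s + 1) → ℕ) : nimSum x = x 0 ^^^ nimSum (Fin.tail x) := by
  simp only [nimSum, List.ofFn_succ, List.foldr_cons]
  rfl

theorem nimSum_update {s : ℕ} (x : Fin s → ℕ) (i : Fin s) (y : ℕ) :
    nimSum (Function.update x i y) = nimSum x ^^^ x i ^^^ y := by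
  induction s with
  | zero => exact i.elim0
  | succ s ih =>
    rw [nimSum_succ, nimSum_succ x]
    cases i using Fin.cases with
    | zero =>
      rw [Fin.tail_update_zero, Function.update_self]
      simp only [Nat.xor_comm, xor_cancel_left]
    | succ j =>
      rw [Fin.tail_update_succ, ih, Function.update_of_ne (Fin.succ_ne_zero j).symm]
      simp only [Fin.tail, Nat.xor_assoc]

theorem exists_xor_nimSum_xor_lt {s : ℕ} (x : Fin s → ℕ) {m : ℕ} (hm : m < nimSum x) :
    ∃ i, m ^^^ nimSum x ^^^ x i < x i := by
  induction s generalizing m with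
  | zero => simp at hm
  | succ s ih =>
    rw [nimSum_succ] at hm ⊢
    rcases Nat.lt_xor_cases hm with hhead | htail
    · exact ⟨0, by rwa [Nat.xor_comm (x 0), ← Nat.xor_assoc, xor_cancel_right]⟩
    · obtain ⟨j, hj⟩ := ih (Fin.tail x) htail
      refine ⟨j.succ, ?_⟩
      simpa only [Fin.tail, Nat.xor_assoc] using hj

theorem nimsum_eq_mex_decrease_multi_general (s : ℕ) (x : Fin s → ℕ) :
    nimSum x =
      mex (⋃ i : Fin s,
        {g | ∃ k, 1 ≤ k ∧ k ≤ x i ∧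
          g = nimSum (Function.update x i (x i - k))}) := by
  refine (mex_eq_of_notMem_of_forall_lt_mem ?_ fun m hm => ?_).symm
  · simp only [Set.mem_iUnion, Set.mem_ofPred_eq, not_exists, not_and]
    intro i k hk1 hkx hN
    rw [nimSum_update, Nat.xor_assoc] at hN
    nth_rw 1 [← Nat.xor_zero (nimSum x)] at hN
    rw [Nat.xor_right_inj, eq_comm, Nat.xor_eq_zero_iff] at hN
    omega
  · obtain ⟨i, hi⟩ := exists_xor_nimSum_xor_lt x hm
    refine Set.mem_iUnion.mpr ⟨i, x i - (m ^^^ nimSum x ^^^ x i), by omega, by omega, ?_⟩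
    rw [Nat.sub_sub_self hi.le, nimSum_update]
    simp only [Nat.xor_left_comm, Nat.xor_comm, Nat.xor_self, Nat.xor_zero]

/-- The nim-sum of the coordinates equals the mex of the nim-sums obtained by
strictly decreasing exactly one coordinate. -/
theorem nimsum_eq_mex_decrease_multi (s : ℕ) (hs : 1 ≤ s) (x : Fin s → ℕ) :
    nimSum x =
      mex (⋃ i : Fin s,
        {g | ∃ k, 1 ≤ k ∧ k ≤ x i ∧
          g = nimSum (Function.update x i (x i - k))}) :=
  nimsum_eq_mex_decrease_multi_general s x
end

section
/- Fix an odd t ∈ ℕ. In two-pile Nim with a one-time pass not allowed when both piles have at most t stones, a position (x, y, p) with p ≤ F_t(x,y) is a P-position if and only if x ⊕ y ⊕ p = 0. -/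
/-- `passAvail t x y = 0` if both piles have at most `t` stones (pass not
allowed), and `1` otherwise; it bounds the pass-availability coordinate. -/
def passAvail (t x y : ℕ) : ℕ := if x ≤ t ∧ y ≤ t then 0 else 1

/-!
Since every move lowers `x + y + p`, the P-position recursion has a unique solution on legal
positions, so it suffices to check that the set `x ⊕ y = p` satisfies it.

From `x ⊕ y = p` a pile move keeps `p` unless it enters the square `[0, t]²`, where the pass is
lost; it then has to reach `(y, y, 0)` from `(y ⊕ 1, y, 1)`. Since `t` is odd, `y ≤ t` implies
`y ⊕ 1 ≤ t`, so `(y ⊕ 1, y, 1)` was already inside the square and not a legal position.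
Conversely, from `x ⊕ y ≠ p` with `y < x` one moves to `(y, y, 0)` if `p = 0` or `y ≤ t`, and
otherwise to `(y ⊕ 1, y, 1)`.
-/

def NoMoveInto (t : ℕ) (S : ℕ → ℕ → ℕ → Prop) (x y p : ℕ) : Prop :=
  (∀ u < x, ¬ S u y (min p (passAvail t u y))) ∧
  (∀ w < y, ¬ S x w (min p (passAvail t x w))) ∧
  (p = 1 → ¬ S x y 0)

lemma passAvail_le_one (t x y : ℕ) : passAvail t x y ≤ 1 := by
  unfold passAvail; split <;> omega

lemma passAvail_comm (t x y : ℕ) : passAvail t x y = passAvail t y x := by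
  simp only [passAvail, and_comm]

lemma Nat.xor_one_le_succ (y : ℕ) : y ^^^ 1 ≤ y + 1 := by
  rcases Nat.even_or_odd y with hy | hy
  · rw [Nat.xor_one_of_even hy]
  · rw [Nat.xor_one_of_odd hy]; omega

lemma Nat.xor_one_le_of_le_of_odd {y t : ℕ} (ht : Odd t) (hy : y ≤ t) : y ^^^ 1 ≤ t := by
  rcases Nat.even_or_odd y with hy' | hy'
  · have : y ≠ t := fun h => Nat.not_even_iff_odd.mpr ht (h ▸ hy')
    rw [Nat.xor_one_of_even hy']; omega
  · rw [Nat.xor_one_of_odd hy']; omega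

lemma noMoveInto_congr {t x y p : ℕ} {S S' : ℕ → ℕ → ℕ → Prop}
    (h : ∀ u w q, u + w + q < x + y + p → q ≤ passAvail t u w → (S u w q ↔ S' u w q)) :
    NoMoveInto t S x y p ↔ NoMoveInto t S' x y p := by
  refine and_congr (forall₂_congr fun u _ => not_congr ?_)
    (and_congr (forall₂_congr fun w _ => not_congr ?_) (imp_congr_right fun hp => not_congr ?_))
  · exact h _ _ _ (by omega) (min_le_right _ _)
  · exact h _ _ _ (by omega) (min_le_right _ _)
  · exact h _ _ _ (by omega) (Nat.zero_le _)

lemma xor_ne_min_passAvail_of_lt {t x y p u : ℕ} (ht : Odd t) (hp : p ≤ passAvail t x y)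
    (hxy : x ^^^ y = p) (hu : u < x) : u ^^^ y ≠ min p (passAvail t u y) := by
  intro huy
  have hp1 := hp.trans (passAvail_le_one t x y)
  unfold passAvail at hp huy
  split_ifs at huy with hut
  · obtain rfl : u = y := Nat.xor_eq_zero_iff.mp (by simpa using huy)
    interval_cases p
    · exact hu.ne' (Nat.xor_eq_zero_iff.mp hxy)
    · have hx : x = u ^^^ 1 := by rw [← hxy, Nat.xor_comm x u, Nat.xor_xor_cancel_left]
      rw [if_pos ⟨hx ▸ Nat.xor_one_le_of_le_of_odd ht hut.2, hut.2⟩] at hp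
      omega
  · rw [min_eq_left hp1, ← hxy, Nat.xor_left_inj] at huy
    exact hu.ne huy

lemma exists_lt_xor_eq_min_passAvail {t x y p : ℕ} (hyx : y < x) (hp : p ≤ 1)
    (hne : x ^^^ y ≠ p) : ∃ u < x, u ^^^ y = min p (passAvail t u y) := by
  by_cases h : p = 0 ∨ y ≤ t
  · refine ⟨y, hyx, ?_⟩
    unfold passAvail
    rcases h with rfl | hyt
    · simp
    · simp [hyt]
  · simp only [not_or, not_le] at h
    obtain ⟨hp0, hty⟩ := h
    obtain rfl : p = 1 := by omega
    have hcancel : (y ^^^ 1) ^^^ y = 1 := by rw [Nat.xor_comm y 1, Nat.xor_xor_cancel_right]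
    refine ⟨y ^^^ 1, lt_of_le_of_ne ((Nat.xor_one_le_succ y).trans hyx) ?_, ?_⟩
    · rintro rfl
      exact hne hcancel
    · simp [passAvail, hcancel, not_le.mpr hty]

lemma xor_eq_zero_iff_noMoveInto {t x y p : ℕ} (ht : Odd t) (hp : p ≤ passAvail t x y) :
    x ^^^ y ^^^ p = 0 ↔ NoMoveInto t (fun x y p => x ^^^ y ^^^ p = 0) x y p := by
  have hp1 := hp.trans (passAvail_le_one t x y)
  simp only [NoMoveInto, Nat.xor_eq_zero_iff]
  constructor
  · intro hxy
    refine ⟨fun u hu => xor_ne_min_passAvail_of_lt ht hp hxy hu, fun w hw => ?_, ?_⟩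
    · rw [Nat.xor_comm, passAvail_comm]
      rw [passAvail_comm] at hp
      exact xor_ne_min_passAvail_of_lt ht hp (Nat.xor_comm x y ▸ hxy) hw
    · rintro rfl rfl
      simp at hxy
  · rintro ⟨hx, hy, hpass⟩
    by_contra hne
    rcases lt_trichotomy y x with hyx | rfl | hxy
    · obtain ⟨u, hu, h⟩ := exists_lt_xor_eq_min_passAvail hyx hp1 hne
      exact hx u hu h
    · simp only [Nat.xor_self] at hne hpass
      exact hpass (by omega) trivial
    · obtain ⟨w, hw, h⟩ := exists_lt_xor_eq_min_passAvail hxy hp1 (Nat.xor_comm x y ▸ hne)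
      rw [Nat.xor_comm, passAvail_comm] at h
      exact hy w hw h

/-- Two-pile Nim with a one-time pass, the pass not being allowed when both
piles have at most `t` stones, where `t` is odd: a position `(x, y, p)` with
`p ≤ passAvail t x y` is a P-position iff `x ⊕ y ⊕ p = 0`. Here `P` is the
P-position predicate: a position is a P-position iff every move from it
(removing stones from a pile, adjusting pass availability, or using the pass)
leads to a non-P-position. -/
theorem two_pile_nim_with_pass (t : ℕ) (ht : Odd t)
    (P : ℕ → ℕ → ℕ → Prop)
    (hP : ∀ x y p : ℕ, P x y p ↔
      ((∀ u < x, ¬ P u y (min p (passAvail t u y))) ∧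
       (∀ w < y, ¬ P x w (min p (passAvail t x w))) ∧
       (p = 1 → ¬ P x y 0))) :
    ∀ x y p : ℕ, p ≤ passAvail t x y →
      (P x y p ↔ x ^^^ y ^^^ p = 0) := by
  intro x y p
  induction hn : x + y + p using Nat.strong_induction_on generalizing x y p with
  | _ n ih =>
    intro hp
    rw [hP, xor_eq_zero_iff_noMoveInto ht hp]
    exact noMoveInto_congr fun u w q hlt hq => ih _ (hn ▸ hlt) u w q rfl hq
end

section
/- Fix an odd t ∈ ℕ. In three-pile Nim with a one-time pass not allowed when all three piles have at most t stones, a position (x, y, z, p) with p ≤ F_t(x,y,z) is a P-position if and only if x ⊕ y ⊕ z ⊕ p = 0. -/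
/-!
The positions of zero nim-sum form a kernel of the move relation on legal positions: no move
joins two of them, and every other legal position has a move into one. A well-founded relation
has at most one kernel, so they are exactly the P-positions.

Since `p ≤ 1`, halving the piles turns the condition `x ^^^ y ^^^ z ^^^ p = 0` into ordinary Nim on
`x / 2, y / 2, z / 2`. When the pass is available and the halved nim-sum is nonzero, the pile `a`
that Nim tells us to reduce exceeds both `b ^^^ c` and `b ^^^ c ^^^ 1`, and since `t` is odd these
two candidates lie on the same side of `t`; so one of them makes the nim-sum, including the pass
bit as it is after the move, vanish.
-/

/-- `passAvail3 t x y z = 0` if all three piles have at most `t` stones (pass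
not allowed), and `1` otherwise; it bounds the pass-availability coordinate. -/
def passAvail3 (t x y z : ℕ) : ℕ := if x ≤ t ∧ y ≤ t ∧ z ≤ t then 0 else 1

/-- `r b a` means that `b` is reached from `a` in one move. -/
def IsKernelOn {α : Type*} (r : α → α → Prop) (L P : α → Prop) : Prop :=
  ∀ a, L a → (P a ↔ ∀ b, r b a → ¬ P b)

theorem WellFounded.isKernelOn_unique {α : Type*} {r : α → α → Prop} (hr : WellFounded r)
    {L P Q : α → Prop} (hL : ∀ a b, r b a → L a → L b)
    (hP : IsKernelOn r L P) (hQ : IsKernelOn r L Q) {a : α} (ha : L a) : P a ↔ Q a := by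
  induction a using hr.induction with
  | _ a ih =>
    rw [hP a ha, hQ a ha]
    exact forall₂_congr fun b hb => not_congr (ih b hb (hL a b hb ha))

theorem Nat.xor_one_div_two (m : ℕ) : (m ^^^ 1) / 2 = m / 2 := by
  rw [Nat.xor_div_two]; simp

theorem Nat.xor_one_le_iff_of_odd {t : ℕ} (ht : Odd t) (m : ℕ) : m ^^^ 1 ≤ t ↔ m ≤ t := by
  have := m.xor_one_div_two
  rw [Nat.odd_iff] at ht
  omega

theorem Nat.xor_xor_xor_eq_zero_iff {a b c d : ℕ} :
    a ^^^ b ^^^ c ^^^ d = 0 ↔ a = b ^^^ c ^^^ d := by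
  rw [xor_eq_zero_iff, xor_eq_iff_left_eq, xor_eq_iff_left_eq,
    show d ^^^ c ^^^ b = b ^^^ c ^^^ d by ac_rfl]

theorem passAvail3_le_one (t x y z : ℕ) : passAvail3 t x y z ≤ 1 := by
  unfold passAvail3; split <;> simp

theorem passAvail3_swap (t x y z : ℕ) : passAvail3 t x y z = passAvail3 t y x z := by
  simp only [passAvail3, and_left_comm]

theorem passAvail3_rotate (t x y z : ℕ) : passAvail3 t x y z = passAvail3 t z x y := by
  simp only [passAvail3, and_rotate]

namespace PassNim

def Legal (t : ℕ) : ℕ × ℕ × ℕ × ℕ → Prop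
  | (x, y, z, p) => p ≤ passAvail3 t x y z

def nimSum : ℕ × ℕ × ℕ × ℕ → ℕ
  | (x, y, z, p) => x ^^^ y ^^^ z ^^^ p

def size : ℕ × ℕ × ℕ × ℕ → ℕ
  | (x, y, z, p) => x + y + z + p

inductive IsOption (t : ℕ) : ℕ × ℕ × ℕ × ℕ → ℕ × ℕ × ℕ × ℕ → Prop
  | left {x y z p u : ℕ} : u < x → IsOption t (u, y, z, min p (passAvail3 t u y z)) (x, y, z, p)
  | middle {x y z p w : ℕ} : w < y → IsOption t (x, w, z, min p (passAvail3 t x w z)) (x, y, z, p)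
  | right {x y z p v : ℕ} : v < z → IsOption t (x, y, v, min p (passAvail3 t x y v)) (x, y, z, p)
  | pass {x y z : ℕ} : IsOption t (x, y, z, 0) (x, y, z, 1)

variable {t : ℕ}

theorem pile_move_xor_ne_zero (ht : Odd t) {a b c p u : ℕ} (hp : p ≤ passAvail3 t a b c)
    (h : a ^^^ b ^^^ c ^^^ p = 0) (hu : u < a) :
    u ^^^ b ^^^ c ^^^ min p (passAvail3 t u b c) ≠ 0 := by
  rw [Ne, Nat.xor_xor_xor_eq_zero_iff] at *
  intro hu'
  obtain rfl | rfl : p = 0 ∨ p = 1 := by have := passAvail3_le_one t a b c; omega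
  · simp only [Nat.zero_min, Nat.xor_zero] at h hu'
    omega
  by_cases hsmall : u ≤ t ∧ b ≤ t ∧ c ≤ t
  · have hub : u = b ^^^ c := by simpa [passAvail3, hsmall] using hu'
    have ha : a ≤ t := by rw [h, ← hub, Nat.xor_one_le_iff_of_odd ht]; exact hsmall.1
    simp [passAvail3, ha, hsmall.2] at hp
  · have hua : u = a := by simpa [passAvail3, hsmall, ← h] using hu'
    exact hu.ne hua

theorem exists_pile_move_xor_eq_zero (ht : Odd t) {a b c : ℕ} (h : (b ^^^ c) / 2 < a / 2) :
    ∃ u < a, u ^^^ b ^^^ c ^^^ min 1 (passAvail3 t u b c) = 0 := by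
  simp only [Nat.xor_xor_xor_eq_zero_iff]
  have := (b ^^^ c).xor_one_div_two
  by_cases hsmall : b ^^^ c ≤ t ∧ b ≤ t ∧ c ≤ t
  · refine ⟨b ^^^ c, by omega, ?_⟩
    simp [passAvail3, hsmall]
  · refine ⟨b ^^^ c ^^^ 1, by omega, ?_⟩
    simp [passAvail3, Nat.xor_one_le_iff_of_odd ht, hsmall]

theorem forall_isOption_iff {x y z p : ℕ} {R : ℕ × ℕ × ℕ × ℕ → Prop} :
    (∀ b, IsOption t b (x, y, z, p) → R b) ↔
      (∀ u < x, R (u, y, z, min p (passAvail3 t u y z))) ∧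
      (∀ w < y, R (x, w, z, min p (passAvail3 t x w z))) ∧
      (∀ v < z, R (x, y, v, min p (passAvail3 t x y v))) ∧
      (p = 1 → R (x, y, z, 0)) := by
  refine ⟨fun h => ⟨fun u hu => h _ (.left hu), fun w hw => h _ (.middle hw),
    fun v hv => h _ (.right hv), by rintro rfl; exact h _ .pass⟩, ?_⟩
  rintro ⟨hx, hy, hz, hpass⟩ b hb
  cases hb with
  | left hu => exact hx _ hu
  | middle hw => exact hy _ hw
  | right hv => exact hz _ hv
  | pass => exact hpass rfl

theorem IsOption.size_lt {a b : ℕ × ℕ × ℕ × ℕ} (h : IsOption t b a) : size b < size a := by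
  cases h <;> simp only [size] <;> omega

theorem wellFounded_isOption : WellFounded (IsOption t) :=
  Subrelation.wf IsOption.size_lt (InvImage.wf size wellFounded_lt)

theorem IsOption.legal {a b : ℕ × ℕ × ℕ × ℕ} (h : IsOption t b a) : Legal t b := by
  cases h <;> simp [Legal]

theorem nimSum_option_ne_zero (ht : Odd t) {a b : ℕ × ℕ × ℕ × ℕ} (ha : Legal t a)
    (h : nimSum a = 0) (hb : IsOption t b a) : nimSum b ≠ 0 := by
  cases hb with
  | left hu => exact pile_move_xor_ne_zero ht ha h hu
  | @middle x y z p w hw =>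
    simp only [nimSum]
    rw [passAvail3_swap, Nat.xor_comm x w]
    exact pile_move_xor_ne_zero ht (by rw [← passAvail3_swap]; exact ha)
      (by rwa [Nat.xor_comm y x]) hw
  | @right x y z p v hv =>
    simp only [nimSum]
    rw [passAvail3_rotate, show x ^^^ y ^^^ v = v ^^^ x ^^^ y by ac_rfl]
    exact pile_move_xor_ne_zero ht (by rw [← passAvail3_rotate]; exact ha)
      (by rwa [show z ^^^ x ^^^ y = x ^^^ y ^^^ z by ac_rfl]) hv
  | @pass x y z =>
    intro h0
    simp only [nimSum, Nat.xor_zero] at h h0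
    simp [h0] at h

theorem exists_option_nimSum_eq_zero (ht : Odd t) {a : ℕ × ℕ × ℕ × ℕ} (ha : Legal t a)
    (h : nimSum a ≠ 0) : ∃ b, IsOption t b a ∧ nimSum b = 0 := by
  obtain ⟨x, y, z, p⟩ := a
  obtain rfl | rfl : p = 0 ∨ p = 1 := by
    have : p ≤ passAvail3 t x y z := ha
    have := passAvail3_le_one t x y z
    omega
  · simp only [nimSum, Nat.xor_zero] at h
    rcases Nat.xor_trichotomy h with hx | hy | hz
    · exact ⟨_, .left hx, by simp [nimSum]⟩
    · exact ⟨_, .middle hy, by simp [nimSum]⟩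
    · exact ⟨_, .right hz, by simp [nimSum]⟩
  by_cases h0 : x ^^^ y ^^^ z = 0
  · exact ⟨_, .pass, by simpa only [nimSum, Nat.xor_zero]⟩
  have hhalf : x / 2 ^^^ y / 2 ^^^ z / 2 ≠ 0 := by
    simp only [nimSum, Ne, xor_eq_zero_iff] at h
    rw [← Nat.xor_div_two, ← Nat.xor_div_two]
    omega
  rcases Nat.xor_trichotomy hhalf with hx | hy | hz
  · obtain ⟨u, hu, hu0⟩ := exists_pile_move_xor_eq_zero ht (a := x) (b := y) (c := z)
      (by rwa [Nat.xor_div_two])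
    exact ⟨_, .left hu, hu0⟩
  · obtain ⟨w, hw, hw0⟩ := exists_pile_move_xor_eq_zero ht (a := y) (b := z) (c := x)
      (by rwa [Nat.xor_div_two])
    refine ⟨_, .middle hw, ?_⟩
    simp only [nimSum]
    rw [← passAvail3_rotate, ← hw0]
    ac_rfl
  · obtain ⟨v, hv, hv0⟩ := exists_pile_move_xor_eq_zero ht (a := z) (b := x) (c := y)
      (by rwa [Nat.xor_div_two])
    refine ⟨_, .right hv, ?_⟩
    simp only [nimSum]
    rw [passAvail3_rotate, ← hv0]
    ac_rfl

theorem isKernelOn_nimSum_eq_zero (ht : Odd t) :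
    IsKernelOn (IsOption t) (Legal t) (nimSum · = 0) := fun _ ha =>
  ⟨fun h _ hb => nimSum_option_ne_zero ht ha h hb, fun h => by_contra fun h0 =>
    let ⟨b, hb, hb0⟩ := exists_option_nimSum_eq_zero ht ha h0
    h b hb hb0⟩

end PassNim

open PassNim in
/-- Three-pile Nim with a one-time pass, the pass not being allowed when all
three piles have at most `t` stones, where `t` is odd: a position
`(x, y, z, p)` with `p ≤ passAvail3 t x y z` is a P-position iff
`x ⊕ y ⊕ z ⊕ p = 0`. Here `P` is the P-position predicate: a position is a
P-position iff every move from it (removing stones from a pile, adjusting pass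
availability, or using the pass) leads to a non-P-position. -/
theorem three_pile_nim_with_pass (t : ℕ) (ht : Odd t)
    (P : ℕ → ℕ → ℕ → ℕ → Prop)
    (hP : ∀ x y z p : ℕ, P x y z p ↔
      ((∀ u < x, ¬ P u y z (min p (passAvail3 t u y z))) ∧
       (∀ w < y, ¬ P x w z (min p (passAvail3 t x w z))) ∧
       (∀ v < z, ¬ P x y v (min p (passAvail3 t x y v))) ∧
       (p = 1 → ¬ P x y z 0))) :
    ∀ x y z p : ℕ, p ≤ passAvail3 t x y z →
      (P x y z p ↔ x ^^^ y ^^^ z ^^^ p = 0) := by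
  intro x y z p hp
  have hPkernel : IsKernelOn (IsOption t) (Legal t) fun s => P s.1 s.2.1 s.2.2.1 s.2.2.2 := by
    rintro ⟨x, y, z, p⟩ -
    exact (hP x y z p).trans
      (forall_isOption_iff (R := fun s => ¬ P s.1 s.2.1 s.2.2.1 s.2.2.2)).symm
  exact wellFounded_isOption.isKernelOn_unique (fun _ _ hb _ => hb.legal) hPkernel
    (isKernelOn_nimSum_eq_zero ht) (a := (x, y, z, p)) hp
end
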